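/- arXiv:1502.04897 — 4 statements merged into one kernel-verified Lean document; each statement's English description precedes it below -/
import Mathlib

section
/- If 0 ≤ x_1 ≤ x_2 ≤ … ≤ x_N < 1, then D_N(x_1,…,x_N) = 1/N + max_{1≤n≤N}(n/N − x_n) − min_{1≤n≤N}(n/N − x_n). -/
/-- Discrepancy of `x 0, …, x (N-1)` in `[0,1)`. -/
noncomputable def discrepancy {N : ℕ} (x : Fin N → ℝ) : ℝ :=
  sSup {d : ℝ | ∃ a b : ℝ, 0 ≤ a ∧ a < b ∧ b ≤ 1 ∧
    d = |(∑ n, Set.indicator (Set.Ico a b) (fun _ => (1 : ℝ)) (x n)) / N - (b - a)|}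

/-!
Write `A(c)` for the number of points below `c`. Then `A(b) - A(a)` points lie in `[a, b)`,
so the local discrepancy splits as `(A(b)/N - b) + (a - A(a)/N)` (or its negative). For sorted
points, `A(c)/N - c ≤ max (n/N - x_n)` and `c - A(c)/N ≤ 1/N - min (n/N - x_n)`, comparing `c`
with the last point below it and the first point not below it; this gives the upper bound.
If the maximum is attained at `i` and the minimum at `j`, the intervals `[x_j, x_i + δ)`
(when `j ≤ i`) or `[x_i + δ, x_j)` (when `i < j`) show that the bound is sharp as `δ → 0`.
-/

open Finset

noncomputable def countBelow {ι : Type*} [Fintype ι] (x : ι → ℝ) (c : ℝ) : ℕ :=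
  #{n | x n < c}

theorem sum_indicator_Ico_eq_countBelow_sub {ι : Type*} [Fintype ι] (x : ι → ℝ) {a b : ℝ}
    (hab : a ≤ b) :
    ∑ n, Set.indicator (Set.Ico a b) (fun _ => (1 : ℝ)) (x n)
      = (countBelow x b : ℝ) - countBelow x a := by
  have hsplit : ∀ n, Set.indicator (Set.Ico a b) (fun _ => (1 : ℝ)) (x n)
      = (if x n < b then 1 else 0) - (if x n < a then 1 else 0) := by
    intro n
    by_cases ha : x n < a
    · simp [ha, ha.trans_le hab]
    · simp [ha, Set.indicator_apply, not_lt.mp ha]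
  simp only [hsplit, sum_sub_distrib, sum_boole, countBelow]

theorem countBelow_le_card {ι : Type*} [Fintype ι] (x : ι → ℝ) (c : ℝ) :
    countBelow x c ≤ Fintype.card ι :=
  card_filter_le _ _

section Sorted

variable {N : ℕ} {x : Fin N → ℝ}

theorem lt_iff_lt_countBelow (hx : Monotone x) {c : ℝ} {n : Fin N} :
    x n < c ↔ (n : ℕ) < countBelow x c := by
  constructor
  · intro h
    have hsub : Iic n ⊆ ({m | x m < c} : Finset (Fin N)) := fun m hm => by
      simpa using (hx (mem_Iic.mp hm)).trans_lt h
    exact (Fin.card_Iic n).symm.trans_le (card_le_card hsub)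
  · intro h
    by_contra! hc
    have hsub : ({m | x m < c} : Finset (Fin N)) ⊆ Iio n := fun m hm => by
      simp only [mem_filter, mem_univ, true_and] at hm
      simpa using lt_of_not_ge fun hnm => (hc.trans (hx hnm)).not_gt hm
    have := card_le_card hsub
    rw [Fin.card_Iio] at this
    exact (this.trans_lt h).false.elim

noncomputable def rankGap (x : Fin N → ℝ) (n : Fin N) : ℝ :=
  ((n : ℕ) + 1 : ℝ) / N - x n

theorem rankGap_zero_le (h0 : ∀ n, 0 ≤ x n) (hN : 0 < N) :
    rankGap x ⟨0, hN⟩ ≤ 1 / N := by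
  simpa [rankGap] using h0 ⟨0, hN⟩

theorem rankGap_last_pos (h1 : ∀ n, x n < 1) (hN : 0 < N) :
    0 < rankGap x ⟨N - 1, Nat.sub_one_lt_of_lt hN⟩ := by
  have hNR : (N : ℝ) ≠ 0 := by positivity
  simp only [rankGap, Nat.cast_sub hN, Nat.cast_one, sub_add_cancel, div_self hNR, sub_pos]
  exact h1 _

theorem lt_of_rankGap_le {i j : Fin N} (hij : i < j) (hgap : rankGap x j ≤ rankGap x i) :
    x i < x j := by
  have hN : (0 : ℝ) < N := by exact_mod_cast j.pos
  have : ((i : ℕ) + 1 : ℝ) / N < ((j : ℕ) + 1 : ℝ) / N := by gcongr; exact_mod_cast hij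
  unfold rankGap at hgap
  linarith

theorem countBelow_div_sub_le (hx : Monotone x) {M c : ℝ} (hM : ∀ n, rankGap x n ≤ M)
    (hM0 : 0 ≤ M) (hc : 0 ≤ c) : (countBelow x c : ℝ) / N - c ≤ M := by
  rcases Nat.eq_zero_or_pos (countBelow x c) with hA | hA
  · simp only [hA, CharP.cast_eq_zero, zero_div, zero_sub]
    linarith
  · have hAN := countBelow_le_card x c
    rw [Fintype.card_fin] at hAN
    set n : Fin N := ⟨countBelow x c - 1, by omega⟩
    have hxn : x n < c := (lt_iff_lt_countBelow hx).mpr (Nat.sub_one_lt hA.ne')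
    have hgap : rankGap x n = (countBelow x c : ℝ) / N - x n := by
      simp [rankGap, n, Nat.cast_sub hA]
    linarith [hM n]

theorem sub_countBelow_div_le (hx : Monotone x) (hN : 0 < N) {m c : ℝ}
    (hm : ∀ n, m ≤ rankGap x n) (hm1 : m ≤ 1 / N) (hc : c ≤ 1) :
    c - (countBelow x c : ℝ) / N ≤ 1 / N - m := by
  rcases (countBelow_le_card x c).lt_or_eq with hA | hA
  · rw [Fintype.card_fin] at hA
    set n : Fin N := ⟨countBelow x c, hA⟩
    have hxn : c ≤ x n := not_lt.mp fun h => ((lt_iff_lt_countBelow hx).mp h).false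
    have hgap : rankGap x n = (countBelow x c : ℝ) / N + 1 / N - x n := by
      simp only [rankGap, n, add_div]
    linarith [hm n]
  · simp only [hA, Fintype.card_fin, div_self (Nat.cast_ne_zero.mpr hN.ne' : (N : ℝ) ≠ 0)]
    linarith

noncomputable def localDiscrepancy (x : Fin N → ℝ) (a b : ℝ) : ℝ :=
  |(∑ n, Set.indicator (Set.Ico a b) (fun _ => (1 : ℝ)) (x n)) / N - (b - a)|

theorem localDiscrepancy_le (hx : Monotone x) (hN : 0 < N) {M m a b : ℝ}
    (hM : ∀ n, rankGap x n ≤ M) (hM0 : 0 ≤ M) (hm : ∀ n, m ≤ rankGap x n) (hm1 : m ≤ 1 / N)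
    (ha : 0 ≤ a) (hab : a ≤ b) (hb : b ≤ 1) : localDiscrepancy x a b ≤ 1 / N + M - m := by
  have hA₁ := countBelow_div_sub_le hx hM hM0 ha
  have hA₂ := sub_countBelow_div_le hx hN hm hm1 (hab.trans hb)
  have hB₁ := countBelow_div_sub_le hx hM hM0 (ha.trans hab)
  have hB₂ := sub_countBelow_div_le hx hN hm hm1 hb
  rw [localDiscrepancy, sum_indicator_Ico_eq_countBelow_sub x hab, sub_div, abs_sub_le_iff]
  constructor <;> linarith

theorem le_localDiscrepancy_Ico_from_point (hx : Monotone x) {i j : Fin N} (hji : j ≤ i)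
    {b : ℝ} (hb : x i < b) :
    1 / N + rankGap x i - rankGap x j - (b - x i) ≤ localDiscrepancy x (x j) b := by
  have hB : (i : ℕ) + 1 ≤ countBelow x b := (lt_iff_lt_countBelow hx).mp hb
  have hA : countBelow x (x j) ≤ j := not_lt.mp fun h => ((lt_iff_lt_countBelow hx).mpr h).false
  have hcount : ((i : ℕ) + 1 - (j : ℕ) : ℝ) ≤ (countBelow x b : ℝ) - countBelow x (x j) := by
    have : ((i : ℕ) + 1 : ℝ) ≤ countBelow x b := by exact_mod_cast hB
    have : (countBelow x (x j) : ℝ) ≤ (j : ℕ) := by exact_mod_cast hA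
    linarith
  have hN : (0 : ℝ) ≤ N := N.cast_nonneg
  rw [localDiscrepancy, sum_indicator_Ico_eq_countBelow_sub x (hb.le.trans' (hx hji))]
  refine le_trans ?_ (le_abs_self _)
  have := div_le_div_of_nonneg_right hcount hN
  simp only [rankGap] at this ⊢
  linarith [show ((i : ℕ) + 1 - (j : ℕ) : ℝ) / N
    = ((i : ℕ) + 1 : ℝ) / N - ((j : ℕ) + 1 : ℝ) / N + 1 / N by ring]

theorem le_localDiscrepancy_Ico_to_point (hx : Monotone x) {i j : Fin N} {a : ℝ} (ha : x i < a)
    (haj : a ≤ x j) :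
    1 / N + rankGap x i - rankGap x j - (a - x i) ≤ localDiscrepancy x a (x j) := by
  have hA : (i : ℕ) + 1 ≤ countBelow x a := (lt_iff_lt_countBelow hx).mp ha
  have hB : countBelow x (x j) ≤ j := not_lt.mp fun h => ((lt_iff_lt_countBelow hx).mpr h).false
  have hcount : (countBelow x (x j) : ℝ) - countBelow x a ≤ ((j : ℕ) - ((i : ℕ) + 1) : ℝ) := by
    have : ((i : ℕ) + 1 : ℝ) ≤ countBelow x a := by exact_mod_cast hA
    have : (countBelow x (x j) : ℝ) ≤ (j : ℕ) := by exact_mod_cast hB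
    linarith
  have hN : (0 : ℝ) ≤ N := N.cast_nonneg
  rw [localDiscrepancy, sum_indicator_Ico_eq_countBelow_sub x haj]
  refine le_trans ?_ (neg_le_abs _)
  have := div_le_div_of_nonneg_right hcount hN
  simp only [rankGap] at this ⊢
  linarith [show ((j : ℕ) - ((i : ℕ) + 1) : ℝ) / N
    = ((j : ℕ) + 1 : ℝ) / N - ((i : ℕ) + 1 : ℝ) / N - 1 / N by ring]

end Sorted

/-- If `0 ≤ x_1 ≤ … ≤ x_N < 1` then
`D_N = 1/N + max_{1≤n≤N} (n/N − x_n) − min_{1≤n≤N} (n/N − x_n)`.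
Here `x : Fin N → ℝ` and index `n : Fin N` corresponds to `x_{n+1}`. -/
theorem stmt2 {N : ℕ} (hN : 0 < N) (x : Fin N → ℝ)
    (hmono : Monotone x) (h0 : ∀ n, 0 ≤ x n) (h1 : ∀ n, x n < 1) :
    discrepancy x =
      1 / (N : ℝ) + (⨆ n : Fin N, (((n : ℕ) : ℝ) + 1) / N - x n)
        - (⨅ n : Fin N, (((n : ℕ) : ℝ) + 1) / N - x n) := by
  have : Nonempty (Fin N) := ⟨⟨0, hN⟩⟩
  obtain ⟨i, hi⟩ := Finite.exists_max (rankGap x)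
  obtain ⟨j, hj⟩ := Finite.exists_min (rankGap x)
  change _ = 1 / (N : ℝ) + (⨆ n, rankGap x n) - ⨅ n, rankGap x n
  rw [ciSup_eq_of_forall_le_of_forall_lt_exists_gt hi fun _ hw => ⟨i, hw⟩,
    ciInf_eq_of_forall_ge_of_forall_gt_exists_lt hj fun _ hw => ⟨j, hw⟩]
  refine csSup_eq_of_forall_le_of_forall_lt_exists_gt ⟨_, 0, 1, le_rfl, one_pos, le_rfl, rfl⟩
    ?_ fun w hw => ?_
  · rintro d ⟨a, b, ha, hab, hb, rfl⟩
    exact localDiscrepancy_le hmono hN hi ((rankGap_last_pos h1 hN).trans_le (hi _)).le hj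
      ((hj _).trans (rankGap_zero_le h0 hN)) ha hab.le hb
  rcases le_or_gt j i with hji | hij
  · obtain ⟨b, hib, hb⟩ :=
      exists_between (lt_min (h1 i) (lt_add_of_pos_right (x i) (sub_pos.mpr hw)))
    refine ⟨_, ⟨x j, b, h0 j, (hmono hji).trans_lt hib, (hb.trans_le (min_le_left _ _)).le, rfl⟩,
      ?_⟩
    show w < localDiscrepancy x (x j) b
    linarith [le_localDiscrepancy_Ico_from_point hmono hji hib, hb.trans_le (min_le_right _ _)]
  · obtain ⟨a, hia, ha⟩ := exists_between
      (lt_min (lt_of_rankGap_le hij (hj i)) (lt_add_of_pos_right (x i) (sub_pos.mpr hw)))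
    refine ⟨_, ⟨a, x j, (h0 i).trans hia.le, ha.trans_le (min_le_left _ _), (h1 j).le, rfl⟩, ?_⟩
    show w < localDiscrepancy x a (x j)
    linarith [le_localDiscrepancy_Ico_to_point hmono hia (ha.trans_le (min_le_left _ _)).le,
      ha.trans_le (min_le_right _ _)]
end

section
/- Knopp's Lemma: Let B ⊆ [0,1) be a Lebesgue measurable set and 𝒞 a collection of subintervals of [0,1) such that (1) every open subinterval of [0,1) is an at most countable union of pairwise disjoint elements of 𝒞, and (2) there exists γ > 0 such that λ(A ∩ B) ≥ γ·λ(A) for all A ∈ 𝒞. Then λ(B) = 1. -/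
/-!
By countable additivity the bound `λ(A ∩ B) ≥ γ λ(A)` passes from `𝒞` to every open
subinterval of `[0,1)`, and hence to every small closed ball around a point of
`E = (0,1) \ B`. So `E` has density at most `1 - γ` at each of its points, while by the
Lebesgue density theorem almost every point of `E` has density `1`. Therefore `E` is null
and `λ(B) = λ((0,1)) = 1`.
-/

open MeasureTheory Set Filter Metric Function
open scoped ENNReal Topology

namespace MeasureTheory

variable {α : Type*} [MeasurableSpace α] {μ : Measure α} {B : Set α} {c : ℝ≥0∞}

theorem mul_measure_iUnion_le_measure_iUnion_inter {ι : Type*} [Countable ι] {f : ι → Set α}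
    (hf : ∀ i, MeasurableSet (f i)) (hdisj : Pairwise (Disjoint on f))
    (h : ∀ i, c * μ (f i) ≤ μ (f i ∩ B)) :
    c * μ (⋃ i, f i) ≤ μ ((⋃ i, f i) ∩ B) := by
  rw [← Measure.restrict_apply (MeasurableSet.iUnion hf), measure_iUnion hdisj hf,
    measure_iUnion hdisj hf, ← ENNReal.tsum_mul_left]
  exact ENNReal.tsum_le_tsum fun i => (h i).trans_eq (Measure.restrict_apply (hf i)).symm

theorem measure_diff_le_of_mul_le_measure_inter {S : Set α} (hB : MeasurableSet B)
    (hS : μ S ≠ ∞) (h : c * μ S ≤ μ (S ∩ B)) : μ (S \ B) ≤ (1 - c) * μ S :=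
  calc μ (S \ B) = μ S - μ (S ∩ B) :=
        ENNReal.eq_sub_of_add_eq (ne_top_of_le_ne_top hS (measure_mono inter_subset_left))
          (by rw [add_comm]; exact measure_inter_add_sdiff S hB)
    _ ≤ μ S - c * μ S := tsub_le_tsub_left h _
    _ = (1 - c) * μ S := by rw [ENNReal.sub_mul fun _ _ => hS, one_mul]

theorem measure_eq_zero_of_frequently_measure_inter_closedBall_le {β : Type*} [MetricSpace β]
    [MeasurableSpace β] [BorelSpace β] [SecondCountableTopology β] [HasBesicovitchCovering β]
    (μ : Measure β) [IsLocallyFiniteMeasure μ] {E : Set β} (hc : c < 1)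
    (h : ∀ᵐ x ∂μ.restrict E, ∃ᶠ r in 𝓝[>] 0, μ (E ∩ closedBall x r) ≤ c * μ (closedBall x r)) :
    μ E = 0 := by
  by_contra hE
  have : (ae (μ.restrict E)).NeBot := ae_neBot.2 (by simpa using hE)
  obtain ⟨x, hsmall, hdense⟩ := (h.and (Besicovitch.ae_tendsto_measure_inter_div μ E)).exists
  obtain ⟨r, hle, hlt⟩ := (hsmall.and_eventually (hdense.eventually (lt_mem_nhds hc))).exists
  exact (ENNReal.div_le_of_le_mul hle).not_gt hlt

end MeasureTheory

theorem volume_Ioo_diff_eq_zero_of_mul_volume_le {B : Set ℝ} (hB : MeasurableSet B) {u v : ℝ}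
    {c : ℝ≥0∞} (hc : c ≠ 0)
    (h : ∀ a b, u ≤ a → b ≤ v → c * volume (Ioo a b) ≤ volume (Ioo a b ∩ B)) :
    volume (Ioo u v \ B) = 0 := by
  have hIcc (a b : ℝ) (ha : u ≤ a) (hb : b ≤ v) : c * volume (Icc a b) ≤ volume (Icc a b ∩ B) :=
    calc c * volume (Icc a b) = c * volume (Ioo a b) := by rw [Real.volume_Icc, Real.volume_Ioo]
      _ ≤ volume (Ioo a b ∩ B) := h a b ha hb
      _ ≤ volume (Icc a b ∩ B) := measure_mono (inter_subset_inter_left _ Ioo_subset_Icc_self)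
  refine measure_eq_zero_of_frequently_measure_inter_closedBall_le volume
    (ENNReal.sub_lt_self ENNReal.one_ne_top one_ne_zero hc) (ae_restrict_of_forall_mem
      (measurableSet_Ioo.diff hB) fun x hx => Eventually.frequently ?_)
  have hpos : 0 < min (x - u) (v - x) := lt_min (by linarith [hx.1.1]) (by linarith [hx.1.2])
  filter_upwards [Ioo_mem_nhdsGT hpos] with r hr
  have hru : u ≤ x - r := by linarith [hr.2.trans_le (min_le_left _ _)]
  have hrv : x + r ≤ v := by linarith [hr.2.trans_le (min_le_right _ _)]
  rw [Real.closedBall_eq_Icc]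
  calc volume ((Ioo u v \ B) ∩ Icc (x - r) (x + r)) ≤ volume (Icc (x - r) (x + r) \ B) :=
        measure_mono fun y hy => ⟨hy.2, hy.1.2⟩
    _ ≤ (1 - c) * volume (Icc (x - r) (x + r)) :=
        measure_diff_le_of_mul_le_measure_inter hB measure_Icc_lt_top.ne (hIcc _ _ hru hrv)

/-- Knopp's Lemma: if `B ⊆ [0,1)` is measurable, `𝒞` is a collection of subintervals of
`[0,1)` such that every open subinterval of `[0,1)` is an at most countable union of
pairwise disjoint members of `𝒞`, and `λ(A ∩ B) ≥ γ·λ(A)` for all `A ∈ 𝒞` with some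
`γ > 0`, then `λ(B) = 1`. -/
theorem stmt9 (B : Set ℝ) (hB : MeasurableSet B) (hBsub : B ⊆ Set.Ico 0 1)
    (𝒞 : Set (Set ℝ))
    (h𝒞 : ∀ A ∈ 𝒞, ∃ a b : ℝ, 0 ≤ a ∧ b ≤ 1 ∧ A = Set.Ico a b)
    (h1 : ∀ a b : ℝ, 0 ≤ a → a < b → b ≤ 1 →
      ∃ f : ℕ → Set ℝ, (∀ n, f n ∈ 𝒞 ∨ f n = ∅) ∧
        Pairwise (Function.onFun Disjoint f) ∧ Set.Ioo a b = ⋃ n, f n)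
    (γ : ℝ) (hγ : 0 < γ)
    (h2 : ∀ A ∈ 𝒞, ENNReal.ofReal γ * MeasureTheory.volume A
        ≤ MeasureTheory.volume (A ∩ B)) :
    MeasureTheory.volume B = 1 := by
  have hIoo (a b : ℝ) (ha : 0 ≤ a) (hb : b ≤ 1) :
      ENNReal.ofReal γ * volume (Ioo a b) ≤ volume (Ioo a b ∩ B) := by
    rcases le_or_gt b a with hba | hab
    · simp [Ioo_eq_empty_of_le hba]
    obtain ⟨f, hf𝒞, hdisj, hunion⟩ := h1 a b ha hab hb
    rw [hunion]
    refine mul_measure_iUnion_le_measure_iUnion_inter (fun n => ?_) hdisj fun n => ?_ <;>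
      rcases hf𝒞 n with hn | hn
    · obtain ⟨_, _, _, _, hIco⟩ := h𝒞 _ hn
      exact hIco ▸ measurableSet_Ico
    · exact hn ▸ .empty
    · exact h2 _ hn
    · simp [hn]
  have hnull := volume_Ioo_diff_eq_zero_of_mul_volume_le hB (ENNReal.ofReal_pos.2 hγ).ne' hIoo
  refine le_antisymm ((measure_mono hBsub).trans_eq (by simp)) ?_
  calc (1 : ℝ≥0∞) = volume (Ioo (0 : ℝ) 1) := by simp
    _ ≤ volume B := measure_mono_ae (ae_le_set.2 hnull)
end

section
/- Kac's Lemma: Let (X,ℬ,μ,T) be an ergodic measure-preserving probability system and let A ∈ ℬ have μ(A) > 0. Define the first return time n_A(x) = inf{n ≥ 1 : T^n(x) ∈ A} for x ∈ A. Then ∫_A n_A dμ = 1. -/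
open MeasureTheory Set Filter Topology
open scoped ENNReal

/-- Layer-cake for `ℕ`-valued functions. -/
private lemma lintegral_nat_layer {X : Type*} [MeasurableSpace X] (ν : Measure X) (g : X → ℕ)
    (hg : ∀ n : ℕ, MeasurableSet {x | n < g x}) :
    ∫⁻ x, (g x : ℝ≥0∞) ∂ν = ∑' n : ℕ, ν {x | n < g x} := by
  have key : ∀ x, (g x : ℝ≥0∞)
      = ∑' n : ℕ, ({y | n < g y}).indicator (fun _ => (1 : ℝ≥0∞)) x := by
    intro x
    have h1 : ∀ n : ℕ, ({y | n < g y}).indicator (fun _ => (1 : ℝ≥0∞)) x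
        = if n ∈ Finset.range (g x) then 1 else 0 := by
      intro n; simp [Set.indicator, Finset.mem_range]
    have h2 : ∑ n ∈ Finset.range (g x), (if n ∈ Finset.range (g x) then (1 : ℝ≥0∞) else 0)
        = (g x : ℝ≥0∞) := by
      rw [Finset.sum_congr rfl fun n hn => if_pos hn]
      simp
    rw [tsum_congr h1, tsum_eq_sum (s := Finset.range (g x)) (by intro n hn; simp [hn]), h2]
  calc ∫⁻ x, (g x : ℝ≥0∞) ∂ν
      = ∫⁻ x, ∑' n : ℕ, ({y | n < g y}).indicator (fun _ => (1 : ℝ≥0∞)) x ∂ν := by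
        simp_rw [← key]
    _ = ∑' n : ℕ, ∫⁻ x, ({y | n < g y}).indicator (fun _ => (1 : ℝ≥0∞)) x ∂ν :=
        lintegral_tsum fun n => (measurable_const.indicator (hg n)).aemeasurable
    _ = ∑' n : ℕ, ν {x | n < g x} := by
        refine tsum_congr fun n => ?_
        rw [lintegral_indicator (hg n)]
        simp

/-- Kac's Lemma: for an ergodic measure-preserving `T` on a probability space and a
measurable set `A` with `μ(A) > 0`, the first return time `n_A(x) = inf{n ≥ 1 : Tⁿx ∈ A}`
satisfies `∫_A n_A dμ = 1`. -/
theorem stmt11 {X : Type*} [MeasurableSpace X] (μ : Measure X) [IsProbabilityMeasure μ]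
    (T : X → X) (hT : MeasurePreserving T μ μ)
    (hErg : ∀ E : Set X, MeasurableSet E → T ⁻¹' E = E → μ E = 0 ∨ μ E = 1)
    (A : Set X) (hA : MeasurableSet A) (hApos : 0 < μ A) :
    ∫ x in A, ((sInf {n : ℕ | 1 ≤ n ∧ T^[n] x ∈ A} : ℕ) : ℝ) ∂μ = 1 := by
  classical
  have hTm : Measurable T := hT.measurable
  have hitm : ∀ k : ℕ, Measurable (T^[k]) := fun k => hTm.iterate k
  set f : X → ℕ := fun x => sInf {n : ℕ | 1 ≤ n ∧ T^[n] x ∈ A} with hfdef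
  -- basic sets
  set D : ℕ → Set X := fun n => ⋂ k ∈ Finset.Icc 1 n, T^[k] ⁻¹' Aᶜ with hD
  set C : ℕ → Set X := fun n => ⋂ k ∈ Finset.range (n + 1), T^[k] ⁻¹' Aᶜ with hC
  set R : Set X := {x | ∃ k : ℕ, 1 ≤ k ∧ T^[k] x ∈ A} with hR
  set U : Set X := ⋃ k : ℕ, T^[k] ⁻¹' A with hU
  have hDmeas : ∀ n, MeasurableSet (D n) := fun n =>
    Finset.measurableSet_biInter _ fun k _ => (hitm k) hA.compl
  have hCmeas : ∀ n, MeasurableSet (C n) := fun n =>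
    Finset.measurableSet_biInter _ fun k _ => (hitm k) hA.compl
  have hRmeas : MeasurableSet R := by
    have : R = ⋃ k : ℕ, ⋃ _ : 1 ≤ k, T^[k] ⁻¹' A := by
      ext x; simp [hR]
    rw [this]
    exact MeasurableSet.iUnion fun k => MeasurableSet.iUnion fun _ => (hitm k) hA
  have hUmeas : MeasurableSet U := MeasurableSet.iUnion fun k => (hitm k) hA
  -- layer sets of f
  have hlayer : ∀ n : ℕ, {x | n < f x} = R ∩ D n := by
    intro n
    ext x
    constructor
    · intro h
      simp only [Set.mem_setOf_eq] at h
      have hne : {m : ℕ | 1 ≤ m ∧ T^[m] x ∈ A}.Nonempty := by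
        by_contra h'
        rw [Set.not_nonempty_iff_eq_empty] at h'
        have h0 : f x = 0 := by simp [hfdef, h', Nat.sInf_empty]
        omega
      refine ⟨hne.imp fun k hk => hk, ?_⟩
      simp only [hD, Set.mem_iInter, Finset.mem_Icc]
      rintro k ⟨hk1, hkn⟩
      intro hkA
      have : f x ≤ k := Nat.sInf_le ⟨hk1, hkA⟩
      omega
    · rintro ⟨hxR, hxD⟩
      have hne : {m : ℕ | 1 ≤ m ∧ T^[m] x ∈ A}.Nonempty := hxR
      have hmem := Nat.sInf_mem hne
      simp only [hD, Set.mem_iInter, Finset.mem_Icc] at hxD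
      show n < f x
      by_contra h
      push_neg at h
      exact hxD (f x) ⟨hmem.1, h⟩ hmem.2
  have hfmeas : Measurable f := by
    apply measurable_to_countable'
    intro n
    match n with
    | 0 =>
      have : f ⁻¹' {0} = {x | 0 < f x}ᶜ := by
        ext x; simp [Nat.pos_iff_ne_zero]
      rw [this, hlayer 0]
      exact (hRmeas.inter (hDmeas 0)).compl
    | (m + 1) =>
      have : f ⁻¹' {m + 1} = {x | m < f x} \ {x | m + 1 < f x} := by
        ext x; simp only [Set.mem_preimage, Set.mem_singleton_iff, Set.mem_diff,
          Set.mem_setOf_eq, not_lt]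
        omega
      rw [this, hlayer m, hlayer (m + 1)]
      exact (hRmeas.inter (hDmeas m)).diff (hRmeas.inter (hDmeas (m + 1)))
  -- Poincaré recurrence: almost every point of A returns
  have hAR : μ (A \ R) = 0 := by
    have hcons : Conservative T μ := hT.conservative
    have h0 := hcons.measure_mem_forall_ge_image_notMem_eq_zero hA.nullMeasurableSet 1
    have : A \ R = {x ∈ A | ∀ m ≥ 1, T^[m] x ∉ A} := by
      ext x
      constructor
      · rintro ⟨hxA, hxR⟩
        exact ⟨hxA, fun m hm hmA => hxR ⟨m, hm, hmA⟩⟩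
      · rintro ⟨hxA, h⟩
        exact ⟨hxA, fun ⟨m, hm, hmA⟩ => h m hm hmA⟩
    rw [this]; exact h0
  -- measures of layers
  set a : ℕ → ℝ≥0∞ := fun n => μ (A ∩ D n) with ha
  set c : ℕ → ℝ≥0∞ := fun n => μ (C n) with hc
  have hlayer_meas : ∀ n, μ ({x | n < f x} ∩ A) = a n := by
    intro n
    rw [hlayer n]
    have hsub : A ∩ D n ⊆ (R ∩ D n ∩ A) ∪ (A \ R) := by
      intro x ⟨hxA, hxD⟩
      by_cases hxR : x ∈ R
      · exact Or.inl ⟨⟨hxR, hxD⟩, hxA⟩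
      · exact Or.inr ⟨hxA, hxR⟩
    refine le_antisymm ?_ ?_
    · exact measure_mono fun x ⟨⟨_, hxD⟩, hxA⟩ => ⟨hxA, hxD⟩
    · calc μ (A ∩ D n) ≤ μ ((R ∩ D n ∩ A) ∪ (A \ R)) := measure_mono hsub
        _ ≤ μ (R ∩ D n ∩ A) + μ (A \ R) := measure_union_le _ _
        _ = μ (R ∩ D n ∩ A) := by rw [hAR, add_zero]
  -- telescoping identities
  have hD0 : D 0 = Set.univ := by
    rw [hD]
    refine Set.eq_univ_of_forall fun x => ?_
    refine Set.mem_iInter.2 fun k => Set.mem_iInter.2 fun hk => ?_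
    exact absurd (Finset.mem_Icc.1 hk) (by omega)
  have hsplit : ∀ n, μ (D n) = a n + c n := by
    intro n
    have h1 : A ∩ D n ∪ C n = D n := by
      ext x
      simp only [hC, hD, Set.mem_union, Set.mem_inter_iff, Set.mem_iInter, Finset.mem_Icc,
        Finset.mem_range, Set.mem_preimage, Set.mem_compl_iff]
      constructor
      · rintro (⟨_, h⟩ | h)
        · exact h
        · intro k hk; exact h k (by omega)
      · intro h
        by_cases hxA : x ∈ A
        · exact Or.inl ⟨hxA, h⟩
        · refine Or.inr fun k hk => ?_
          match k with
          | 0 => exact fun hc => hxA (by rwa [Function.iterate_zero_apply] at hc)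
          | (m + 1) => exact h (m + 1) ⟨by omega, by omega⟩
    have h2 : Disjoint (A ∩ D n) (C n) := by
      refine Set.disjoint_left.2 fun x ⟨hxA, _⟩ hxC => ?_
      have := Set.mem_iInter.1 hxC 0
      simp only [Finset.mem_range] at this
      exact (Set.mem_iInter.1 this (by omega) : x ∈ T^[0] ⁻¹' Aᶜ) (by simpa using hxA)
    rw [← h1, measure_union h2 (hCmeas n)]
  have hpre : ∀ n, T ⁻¹' (C n) = D (n + 1) := by
    intro n
    ext x
    simp only [Set.mem_preimage, hC, hD, Set.mem_iInter, Finset.mem_range, Finset.mem_Icc,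
      Set.mem_compl_iff]
    constructor
    · intro h k hk12
      obtain ⟨m, rfl⟩ : ∃ m, k = m + 1 := ⟨k - 1, by omega⟩
      have hm := h m (by omega)
      rw [Function.iterate_succ_apply]
      exact hm
    · intro h k hk
      have hk1 := h (k + 1) ⟨by omega, by omega⟩
      rw [Function.iterate_succ_apply] at hk1
      exact hk1
  have hDsucc : ∀ n, μ (D (n + 1)) = c n := by
    intro n
    rw [← hpre n, hT.measure_preimage (hCmeas n).nullMeasurableSet]
  -- partial sums
  have hpartial : ∀ N : ℕ, (∑ n ∈ Finset.range (N + 1), a n) + c N = 1 := by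
    intro N
    induction N with
    | zero =>
      rw [Finset.sum_range_one, ← hsplit 0, hD0, measure_univ]
    | succ N ih =>
      rw [Finset.sum_range_succ, add_assoc, ← hsplit (N + 1), hDsucc N, ih]
  -- ergodicity: μ U = 1
  have hUone : μ U = 1 := by
    set E : Set X := ⋂ n : ℕ, T^[n] ⁻¹' U with hE
    have hTU : T ⁻¹' U ⊆ U := by
      rintro x hx
      simp only [hU, Set.mem_preimage, Set.mem_iUnion] at hx ⊢
      obtain ⟨k, hk⟩ := hx
      exact ⟨k + 1, by rwa [Function.iterate_succ_apply]⟩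
    have hanti : Antitone fun n : ℕ => T^[n] ⁻¹' U := by
      refine antitone_nat_of_succ_le fun n => ?_
      rw [Function.iterate_succ']
      exact Set.preimage_mono (f := T^[n]) hTU
    have hEmeas : MeasurableSet E := MeasurableSet.iInter fun n => (hitm n) hUmeas
    have hEinv : T ⁻¹' E = E := by
      have h1 : T ⁻¹' E = ⋂ n : ℕ, T^[n + 1] ⁻¹' U := by
        simp only [hE, Set.preimage_iInter]
        exact Set.iInter_congr fun n => by rw [← Set.preimage_comp, ← Function.iterate_succ]
      rw [h1, hE]
      apply Set.Subset.antisymm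
      · exact Set.subset_iInter fun n =>
          (Set.iInter_subset (fun m => T^[m + 1] ⁻¹' U) n).trans (hanti (Nat.le_succ n))
      · exact Set.subset_iInter fun n => Set.iInter_subset (fun m => T^[m] ⁻¹' U) (n + 1)
    have hconst : ∀ n : ℕ, μ (T^[n] ⁻¹' U) = μ U := fun n =>
      (hT.iterate n).measure_preimage hUmeas.nullMeasurableSet
    have htend : Tendsto (fun n : ℕ => μ (T^[n] ⁻¹' U)) atTop (𝓝 (μ E)) :=
      tendsto_measure_iInter_atTop (fun n => ((hitm n) hUmeas).nullMeasurableSet) hanti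
        ⟨0, by simp [measure_ne_top]⟩
    have hEU : μ E = μ U := by
      have : Tendsto (fun _ : ℕ => μ U) atTop (𝓝 (μ E)) := by
        simpa only [hconst] using htend
      exact tendsto_nhds_unique this tendsto_const_nhds
    have hAU : A ⊆ U := fun x hx => Set.mem_iUnion.2 ⟨0, by simpa using hx⟩
    have hEpos : μ E ≠ 0 := by
      rw [hEU]
      exact fun h => absurd (measure_mono_null hAU h) (by exact fun h' => by simp [h'] at hApos)
    rcases hErg E hEmeas hEinv with h | h
    · exact absurd h hEpos
    · rw [← hEU]; exact h
  -- c N → 0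
  have hCanti : Antitone C := by
    refine antitone_nat_of_succ_le fun n => ?_
    intro x hx
    simp only [hC, Set.mem_iInter, Finset.mem_range] at hx ⊢
    exact fun k hk => hx k (by omega)
  have hCinter : ⋂ n, C n = Uᶜ := by
    ext x
    simp only [hC, hU, Set.mem_iInter, Finset.mem_range, Set.mem_compl_iff, Set.mem_iUnion,
      not_exists, Set.mem_preimage, Set.mem_compl_iff]
    constructor
    · intro h k
      exact h k k (by omega)
    · intro h n k _
      exact h k
  have hUc : μ Uᶜ = 0 := by
    have := measure_compl hUmeas (measure_ne_top μ U)
    rw [hUone] at this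
    simpa using this
  have hctend : Tendsto c atTop (𝓝 0) := by
    have := tendsto_measure_iInter_atTop (μ := μ) (s := C)
      (fun n => (hCmeas n).nullMeasurableSet) hCanti ⟨0, measure_ne_top _ _⟩
    rw [hCinter, hUc] at this
    exact this
  -- tsum a = 1
  have htsum : (∑' n : ℕ, a n) = 1 := by
    have h1 : Tendsto (fun N : ℕ => ∑ n ∈ Finset.range (N + 1), a n) atTop (𝓝 (∑' n, a n)) :=
      (ENNReal.tendsto_nat_tsum a).comp (tendsto_add_atTop_nat 1)
    have h2 : Tendsto (fun N : ℕ => ∑ n ∈ Finset.range (N + 1), a n) atTop (𝓝 1) := by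
      have heq : ∀ N : ℕ, (∑ n ∈ Finset.range (N + 1), a n) = 1 - c N := by
        intro N
        have := hpartial N
        have hcle : c N ≠ ⊤ := measure_ne_top _ _
        rw [← this]
        rw [ENNReal.add_sub_cancel_right hcle]
      simp_rw [heq]
      have : Tendsto (fun N => 1 - c N) atTop (𝓝 (1 - 0)) :=
        ENNReal.Tendsto.sub tendsto_const_nhds hctend (Or.inl (by simp))
      simpa using this
    exact tendsto_nhds_unique h1 h2
  -- lintegral computation
  have hlint : ∫⁻ x in A, (f x : ℝ≥0∞) ∂μ = 1 := by
    rw [lintegral_nat_layer (μ.restrict A) f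
      (fun n => by rw [hlayer n]; exact hRmeas.inter (hDmeas n))]
    calc (∑' n : ℕ, μ.restrict A {x | n < f x})
        = ∑' n : ℕ, μ ({x | n < f x} ∩ A) := by
          refine tsum_congr fun n => ?_
          rw [Measure.restrict_apply (by rw [hlayer n]; exact hRmeas.inter (hDmeas n))]
      _ = ∑' n : ℕ, a n := tsum_congr hlayer_meas
      _ = 1 := htsum
  -- convert to Bochner integral
  have hnonneg : 0 ≤ᵐ[μ.restrict A] fun x => ((f x : ℕ) : ℝ) :=
    Filter.Eventually.of_forall fun x => by positivity
  have haesm : AEStronglyMeasurable (fun x => ((f x : ℕ) : ℝ)) (μ.restrict A) :=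
    (measurable_from_top.comp hfmeas).aestronglyMeasurable
  rw [integral_eq_lintegral_of_nonneg_ae hnonneg haesm]
  have : ∀ x, ENNReal.ofReal ((f x : ℕ) : ℝ) = (f x : ℝ≥0∞) := fun x => by
    rw [ENNReal.ofReal_natCast]
  simp_rw [this, hlint]
  simp
end

section
/- Let f : [0,1)² → ℝ be the step function f(x,y) = a_{i,j} for (x,y) ∈ [(i−1)/n, i/n) × [(j−1)/n, j/n), where A = (a_{i,j}) is a real n×n matrix. Then for every probability measure μ on [0,1)² whose marginals are both the uniform distribution on [0,1), ∫ f dμ ≤ (1/n) max_{σ ∈ S_n} Σ_{i=1}^n a_{i,σ(i)}, and this bound is attained by some such measure. -/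
open MeasureTheory

/-- `μ` is a probability measure on `[0,1)²` both of whose marginals are the uniform
distribution on `[0,1)`. -/
def UniformMarginals (μ : Measure (ℝ × ℝ)) : Prop :=
  IsProbabilityMeasure μ ∧
    ∀ B : Set ℝ, MeasurableSet B → B ⊆ Set.Ico 0 1 →
      μ (B ×ˢ Set.Ico (0 : ℝ) 1) = volume B ∧ μ (Set.Ico (0 : ℝ) 1 ×ˢ B) = volume B

/-!
Write `Q i j = gridCell n i ×ˢ gridCell n j` for the grid squares. Integrating the step function
against `μ` gives `(1/n) ∑ B i j * a i j` with `B i j = n μ(Q i j)`. Uniform marginals make `B`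
doubly stochastic, so by Birkhoff–von Neumann it is a convex combination of permutation matrices,
and this expression, linear in `B`, is at most its value at the best permutation. Conversely, for a
maximising `σ`, the measure of density `n` on the squares `Q i (σ i)` has uniform marginals and
`B` equal to the permutation matrix of `σ`, so it attains the bound.
-/

open Set Function
open scoped ENNReal

section Birkhoff

variable {ι R : Type*} [Fintype ι] [DecidableEq ι]

lemma Equiv.Perm.sum_permMatrix_mul [NonAssocSemiring R] (σ : Equiv.Perm ι) (a : ι → ι → R) :
    ∑ i, ∑ j, σ.permMatrix R i j * a i j = ∑ i, a i (σ i) := by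
  simp [PEquiv.toMatrix_apply, Equiv.toPEquiv_apply]

lemma sum_mul_le_sup'_perm_of_mem_doublyStochastic [Field R] [LinearOrder R]
    [IsStrictOrderedRing R] {M : Matrix ι ι R} (hM : M ∈ doublyStochastic R ι) (a : ι → ι → R) :
    ∑ i, ∑ j, M i j * a i j ≤
      Finset.univ.sup' Finset.univ_nonempty (fun σ : Equiv.Perm ι => ∑ i, a i (σ i)) := by
  have hlin : IsLinearMap R fun M : Matrix ι ι R => ∑ i, ∑ j, M i j * a i j :=
    ⟨fun M N => by simp only [Matrix.add_apply, add_mul, Finset.sum_add_distrib],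
      fun c M => by simp only [Matrix.smul_apply, smul_eq_mul, Finset.mul_sum, mul_assoc]⟩
  rw [← SetLike.mem_coe, doublyStochastic_eq_convexHull_permMatrix] at hM
  refine convexHull_min ?_ (convex_halfSpace_le hlin _) hM
  rintro _ ⟨σ, rfl⟩
  simpa only [mem_ofPred_eq, Equiv.Perm.sum_permMatrix_mul] using
    Finset.le_sup' (fun σ : Equiv.Perm ι => ∑ i, a i (σ i)) (Finset.mem_univ σ)

end Birkhoff

section GridCell

variable {n : ℕ}

-- `Fin n` counts from `0`: `gridCell n i` is the paper's `[(i-1)/n, i/n)` for the index `i + 1`.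
def gridCell (n : ℕ) (i : Fin n) : Set ℝ :=
  Ico (((i : ℕ) : ℝ) / n) ((((i : ℕ) : ℝ) + 1) / n)

lemma measurableSet_gridCell (i : Fin n) : MeasurableSet (gridCell n i) := measurableSet_Ico

lemma gridCell_subset_Ico (i : Fin n) : gridCell n i ⊆ Ico 0 1 := by
  have hn : (0 : ℝ) < n := by exact_mod_cast i.pos
  have hi : ((i : ℕ) : ℝ) + 1 ≤ n := by exact_mod_cast i.isLt
  refine Ico_subset_Ico (by positivity) ?_
  rwa [div_le_one hn]

lemma pairwise_disjoint_gridCell : Pairwise (Disjoint on gridCell n) := by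
  intro i j hij
  wlog hlt : i < j generalizing i j
  · exact (this hij.symm (hij.lt_or_gt.resolve_left hlt)).symm
  have hn : (0 : ℝ) < n := by exact_mod_cast i.pos
  have hle : (((i : ℕ) : ℝ) + 1) / n ≤ ((j : ℕ) : ℝ) / n := by gcongr; exact_mod_cast hlt
  exact disjoint_left.2 fun x hi hj => (lt_of_lt_of_le hi.2 (hle.trans hj.1)).false

lemma iUnion_gridCell (hn : 0 < n) : ⋃ i, gridCell n i = Ico 0 1 := by
  refine (iUnion_subset gridCell_subset_Ico).antisymm fun x hx => ?_
  have hn' : (0 : ℝ) < n := by exact_mod_cast hn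
  have hx0 : 0 ≤ x * n := mul_nonneg hx.1 hn'.le
  have hlt : ⌊x * n⌋₊ < n := (Nat.floor_lt hx0).2 (by nlinarith [hx.2])
  refine mem_iUnion.2 ⟨⟨⌊x * n⌋₊, hlt⟩, ?_, ?_⟩
  · rw [div_le_iff₀ hn']; exact Nat.floor_le hx0
  · rw [lt_div_iff₀ hn']; exact Nat.lt_floor_add_one _

lemma volume_gridCell (i : Fin n) : volume (gridCell n i) = (n : ℝ≥0∞)⁻¹ := by
  have hn : (0 : ℝ) < n := by exact_mod_cast i.pos
  rw [gridCell, Real.volume_Ico, ← ENNReal.ofReal_natCast, ← ENNReal.ofReal_inv_of_pos hn]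
  congr 1
  ring

lemma volume_gridCell_inter_gridCell (i j : Fin n) :
    volume (gridCell n i ∩ gridCell n j) = if i = j then (n : ℝ≥0∞)⁻¹ else 0 := by
  split_ifs with h
  · rw [h, inter_self, volume_gridCell]
  · rw [(pairwise_disjoint_gridCell h).inter_eq, measure_empty]

end GridCell

section Marginals

variable {n : ℕ}

lemma sum_measure_inter_gridCell (hn : 0 < n) (μ : Measure ℝ) {A : Set ℝ}
    (hA : MeasurableSet A) : ∑ i, μ (A ∩ gridCell n i) = μ (A ∩ Ico 0 1) := by
  rw [← iUnion_gridCell hn, inter_iUnion, measure_iUnion _ fun i => hA.inter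
    (measurableSet_gridCell i), tsum_fintype]
  exact fun i j h => (pairwise_disjoint_gridCell h).mono inter_subset_right inter_subset_right

lemma sum_measure_prod_gridCell (hn : 0 < n) (μ : Measure (ℝ × ℝ)) {A : Set ℝ}
    (hA : MeasurableSet A) : ∑ j, μ (A ×ˢ gridCell n j) = μ (A ×ˢ Ico 0 1) := by
  rw [← iUnion_gridCell hn, prod_iUnion, measure_iUnion _ fun j => hA.prod
    (measurableSet_gridCell j), tsum_fintype]
  exact fun i j h => disjoint_prod.2 (Or.inr (pairwise_disjoint_gridCell h))

lemma sum_measure_gridCell_prod (hn : 0 < n) (μ : Measure (ℝ × ℝ)) {B : Set ℝ}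
    (hB : MeasurableSet B) : ∑ i, μ (gridCell n i ×ˢ B) = μ (Ico 0 1 ×ˢ B) := by
  rw [← iUnion_gridCell hn, iUnion_prod_const, measure_iUnion _ fun i =>
    (measurableSet_gridCell i).prod hB, tsum_fintype]
  exact fun i j h => disjoint_prod.2 (Or.inl (pairwise_disjoint_gridCell h))

-- The matrix `B_μ` of the paper.
def blockMass (μ : Measure (ℝ × ℝ)) (n : ℕ) : Matrix (Fin n) (Fin n) ℝ :=
  Matrix.of fun i j => n * μ.real (gridCell n i ×ˢ gridCell n j)

lemma UniformMarginals.blockMass_mem_doublyStochastic {μ : Measure (ℝ × ℝ)}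
    (hμ : UniformMarginals μ) (hn : 0 < n) : blockMass μ n ∈ doublyStochastic ℝ (Fin n) := by
  have : IsProbabilityMeasure μ := hμ.1
  have hn' : (n : ℝ) ≠ 0 := by exact_mod_cast hn.ne'
  have hcell (i : Fin n) : (n : ℝ) * (volume (gridCell n i)).toReal = 1 := by
    rw [volume_gridCell, ENNReal.toReal_inv, ENNReal.toReal_natCast, mul_inv_cancel₀ hn']
  simp only [mem_doublyStochastic_iff_sum, blockMass, Matrix.of_apply, ← Finset.mul_sum,
    measureReal_def, ← ENNReal.toReal_sum fun _ _ => measure_ne_top μ _]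
  refine ⟨fun i j => by positivity, fun i => ?_, fun j => ?_⟩
  · rw [sum_measure_prod_gridCell hn μ (measurableSet_gridCell i),
      (hμ.2 _ (measurableSet_gridCell i) (gridCell_subset_Ico i)).1, hcell]
  · rw [sum_measure_gridCell_prod hn μ (measurableSet_gridCell j),
      (hμ.2 _ (measurableSet_gridCell j) (gridCell_subset_Ico j)).2, hcell]

end Marginals

section Coupling

variable {n : ℕ}

noncomputable def gridCoupling (n : ℕ) (σ : Equiv.Perm (Fin n)) : Measure (ℝ × ℝ) :=
  (n : ℝ≥0∞) • ∑ i, (volume.restrict (gridCell n i)).prod (volume.restrict (gridCell n (σ i)))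

lemma gridCoupling_prod (σ : Equiv.Perm (Fin n)) (A B : Set ℝ) :
    gridCoupling n σ (A ×ˢ B) =
      n * ∑ i, volume (A ∩ gridCell n i) * volume (B ∩ gridCell n (σ i)) := by
  simp only [gridCoupling, Measure.smul_apply, Measure.coe_finsetSum, Finset.sum_apply,
    Measure.prod_prod, Measure.restrict_apply' (measurableSet_gridCell _), smul_eq_mul]

lemma uniformMarginals_gridCoupling (hn : 0 < n) (σ : Equiv.Perm (Fin n)) :
    UniformMarginals (gridCoupling n σ) := by
  have hinv : (n : ℝ≥0∞) * (n : ℝ≥0∞)⁻¹ = 1 :=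
    ENNReal.mul_inv_cancel (by exact_mod_cast hn.ne') (ENNReal.natCast_ne_top n)
  have hcell (B : Set ℝ) (i : Fin n) (hB : gridCell n i ⊆ B) :
      volume (B ∩ gridCell n i) = (n : ℝ≥0∞)⁻¹ := by
    rw [inter_eq_right.2 hB, volume_gridCell]
  have hsum {B : Set ℝ} (hB : MeasurableSet B) (hB01 : B ⊆ Ico 0 1) :
      ∑ i, volume (B ∩ gridCell n i) = volume B := by
    rw [sum_measure_inter_gridCell hn _ hB, inter_eq_left.2 hB01]
  refine ⟨⟨?_⟩, fun B hB hB01 => ⟨?_, ?_⟩⟩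
  · rw [← univ_prod_univ, gridCoupling_prod]
    simp only [hcell univ _ (subset_univ _), Finset.sum_const, Finset.card_univ,
      Fintype.card_fin, nsmul_eq_mul, ← mul_assoc, hinv, one_mul]
  · simp only [gridCoupling_prod, hcell _ _ (gridCell_subset_Ico _)]
    rw [← Finset.sum_mul, mul_left_comm, hinv, mul_one, hsum hB hB01]
  · rw [gridCoupling_prod]
    simp only [hcell _ _ (gridCell_subset_Ico _), ← Finset.mul_sum, ← mul_assoc, hinv, one_mul]
    rw [Equiv.sum_comp σ fun j => volume (B ∩ gridCell n j), hsum hB hB01]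

lemma blockMass_gridCoupling (σ : Equiv.Perm (Fin n)) :
    blockMass (gridCoupling n σ) n = σ.permMatrix ℝ := by
  ext j k
  have hn : (n : ℝ≥0∞) ≠ 0 := by exact_mod_cast j.pos.ne'
  simp only [blockMass, Matrix.of_apply, measureReal_def, gridCoupling_prod,
    volume_gridCell_inter_gridCell, ite_mul, zero_mul, Finset.sum_ite_eq, Finset.mem_univ,
    if_true, ← mul_assoc, ENNReal.mul_inv_cancel hn (ENNReal.natCast_ne_top n), one_mul]
  simp only [PEquiv.toMatrix_apply, Equiv.toPEquiv_apply, Option.mem_def, Option.some.injEq,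
    eq_comm (a := k)]
  split_ifs
  · rw [ENNReal.toReal_inv, ENNReal.toReal_natCast, mul_inv_cancel₀ (by exact_mod_cast hn)]
  · rw [ENNReal.toReal_zero, mul_zero]

end Coupling

noncomputable def gridStep (n : ℕ) (a : Fin n → Fin n → ℝ) (p : ℝ × ℝ) : ℝ :=
  ∑ i, ∑ j, (gridCell n i ×ˢ gridCell n j).indicator (fun _ => a i j) p

lemma integral_gridStep {n : ℕ} (μ : Measure (ℝ × ℝ)) [IsFiniteMeasure μ]
    (a : Fin n → Fin n → ℝ) :
    ∫ p, gridStep n a p ∂μ = 1 / (n : ℝ) * ∑ i, ∑ j, blockMass μ n i j * a i j := by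
  have hcell (i j : Fin n) : MeasurableSet (gridCell n i ×ˢ gridCell n j) :=
    (measurableSet_gridCell i).prod (measurableSet_gridCell j)
  have hint (i j : Fin n) :
      Integrable ((gridCell n i ×ˢ gridCell n j).indicator fun _ => a i j) μ :=
    (integrable_const _).indicator (hcell i j)
  unfold gridStep
  rw [integral_finsetSum _ fun i _ => integrable_finsetSum _ fun j _ => hint i j]
  simp only [integral_finsetSum _ fun j _ => hint _ j, integral_indicator_const _ (hcell _ _),
    Finset.mul_sum, blockMass, Matrix.of_apply, smul_eq_mul]
  refine Finset.sum_congr rfl fun i _ => Finset.sum_congr rfl fun j _ => ?_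
  have hn : (n : ℝ) ≠ 0 := by exact_mod_cast i.pos.ne'
  field_simp

/-- For the step function `f(x,y) = a_{i,j}` on `[(i−1)/n, i/n) × [(j−1)/n, j/n)`,
every measure on `[0,1)²` with uniform marginals satisfies
`∫ f dμ ≤ (1/n)·max_{σ ∈ S_n} Σ_i a_{i,σ(i)}`, and the bound is attained. -/
theorem stmt18 (n : ℕ) (hn : 0 < n) (a : Fin n → Fin n → ℝ) (f : ℝ × ℝ → ℝ)
    (hf : f = fun p => ∑ i : Fin n, ∑ j : Fin n,
      Set.indicator
        (Set.Ico (((i : ℕ) : ℝ) / n) ((((i : ℕ) : ℝ) + 1) / n) ×ˢ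
          Set.Ico (((j : ℕ) : ℝ) / n) ((((j : ℕ) : ℝ) + 1) / n))
        (fun _ => a i j) p) :
    (∀ μ : Measure (ℝ × ℝ), UniformMarginals μ →
      ∫ p, f p ∂μ ≤ (1 / (n : ℝ)) *
        Finset.univ.sup' ⟨1, Finset.mem_univ 1⟩
          (fun σ : Equiv.Perm (Fin n) => ∑ i, a i (σ i))) ∧
    (∃ μ : Measure (ℝ × ℝ), UniformMarginals μ ∧
      ∫ p, f p ∂μ = (1 / (n : ℝ)) *
        Finset.univ.sup' ⟨1, Finset.mem_univ 1⟩
          (fun σ : Equiv.Perm (Fin n) => ∑ i, a i (σ i))) := by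
  obtain rfl : f = gridStep n a := hf
  refine ⟨fun μ hμ => ?_, ?_⟩
  · have : IsProbabilityMeasure μ := hμ.1
    rw [integral_gridStep]
    gcongr
    exact sum_mul_le_sup'_perm_of_mem_doublyStochastic (hμ.blockMass_mem_doublyStochastic hn) a
  · obtain ⟨σ, -, hσ⟩ := Finset.exists_mem_eq_sup' Finset.univ_nonempty
      fun σ : Equiv.Perm (Fin n) => ∑ i, a i (σ i)
    have : IsProbabilityMeasure (gridCoupling n σ) := (uniformMarginals_gridCoupling hn σ).1
    refine ⟨gridCoupling n σ, uniformMarginals_gridCoupling hn σ, ?_⟩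
    rw [integral_gridStep, blockMass_gridCoupling, Equiv.Perm.sum_permMatrix_mul, hσ]
end
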